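/- arXiv:0905.3509 — 4 statements merged into one kernel-verified Lean document; each statement's English description precedes it below -/
import Mathlib

section
/- Let A be a C*-algebra, X a semi-inner product A-module, n a natural number, and x_1, ..., x_n elements of X. Then the Gram matrix [⟨x_i, x_j⟩]_{i,j=1}^n is a positive element of the C*-algebra M_n(A) of n×n matrices over A. -/
/-- A semi-inner product `A`-module: a right `A`-module `X` (which is also a complex
vector space, with compatible actions) together with an `A`-valued semi-inner product. -/
structure SemiInnerProductModule (A : Type*) (X : Type*)
    [NonUnitalCStarAlgebra A] [PartialOrder A] [StarOrderedRing A]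
    [AddCommGroup X] [Module ℂ X] where
  /-- the right action of `A` on `X` -/
  rsmul : X → A → X
  /-- the `A`-valued semi-inner product -/
  inner : X → X → A
  add_rsmul : ∀ (x y : X) (a : A), rsmul (x + y) a = rsmul x a + rsmul y a
  rsmul_add : ∀ (x : X) (a b : A), rsmul x (a + b) = rsmul x a + rsmul x b
  rsmul_mul : ∀ (x : X) (a b : A), rsmul (rsmul x a) b = rsmul x (a * b)
  smul_rsmul : ∀ (c : ℂ) (x : X) (a : A), rsmul (c • x) a = c • rsmul x a
  rsmul_smul : ∀ (c : ℂ) (x : X) (a : A), rsmul x (c • a) = c • rsmul x a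
  inner_add : ∀ (x y z : X), inner x (y + z) = inner x y + inner x z
  inner_smul : ∀ (c : ℂ) (x y : X), inner x (c • y) = c • inner x y
  inner_rsmul : ∀ (x y : X) (a : A), inner x (rsmul y a) = inner x y * a
  star_inner : ∀ (x y : X), star (inner x y) = inner y x
  inner_self_nonneg : ∀ x : X, 0 ≤ inner x x

/-- Positivity of a matrix as an element of the C⋆-algebra `Mₙ(A)`:
a matrix is positive iff it is of the form `bᴴ * b`. -/
def Matrix.IsPosElem {A : Type*} {n : ℕ} [NonUnitalCStarAlgebra A]
    (M : Matrix (Fin n) (Fin n) A) : Prop :=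
  ∃ b : Matrix (Fin n) (Fin n) A, M = b.conjTranspose * b

/-! For a matrix `c`, the `k`-th diagonal entry of `c⋆ G c` is `⟨y, y⟩ ≥ 0` with
`y = ∑ᵢ xᵢ cᵢₖ`. Taking `c = G⁻` makes `c⋆ G c = -c³` with `c³ ≥ 0`, so `c³` is a positive
matrix with vanishing diagonal, hence `0`; then `c = 0` and `G = G⁺ ≥ 0`. -/

section CStarAlgebra

variable {B : Type*} [NonUnitalCStarAlgebra B]

lemma IsSelfAdjoint.eq_zero_of_mul_mul_self_eq_zero {c : B} (hc : IsSelfAdjoint c)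
    (h : c * c * c = 0) : c = 0 := by
  have hsq : star (c * c) * (c * c) = 0 := by
    rw [star_mul, hc.star_eq, ← mul_assoc, h, zero_mul]
  rw [← CStarRing.star_mul_self_eq_zero_iff, hc.star_eq]
  exact (CStarRing.star_mul_self_eq_zero_iff _).mp hsq

variable [PartialOrder B] [StarOrderedRing B]

lemma IsSelfAdjoint.nonneg_of_forall_conj_nonpos_eq_zero {a : B} (ha : IsSelfAdjoint a)
    (h : ∀ c : B, star c * a * c ≤ 0 → star c * a * c = 0) : 0 ≤ a := by
  set c := a⁻
  have hc : 0 ≤ c := CFC.negPart_nonneg a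
  have hconj : star c * a * c = -(c * c * c) := by
    conv_lhs => rw [hc.isSelfAdjoint.star_eq, ← CFC.posPart_sub_negPart a ha]
    rw [mul_sub, CFC.negPart_mul_posPart, zero_sub, neg_mul]
  have hcube : c * c * c = 0 := by
    have hnonpos : star c * a * c ≤ 0 := by
      rw [hconj, neg_nonpos]
      exact conjugate_nonneg_of_nonneg hc hc
    simpa only [hconj, neg_eq_zero] using h c hnonpos
  exact (CFC.negPart_eq_zero_iff a ha).mp (hc.isSelfAdjoint.eq_zero_of_mul_mul_self_eq_zero hcube)

end CStarAlgebra

namespace CStarMatrix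

variable {n A : Type*} [Fintype n] [NonUnitalCStarAlgebra A]

lemma star_mul_self_apply_self (d : CStarMatrix n n A) (k : n) :
    (star d * d) k k = ∑ i, star (d i k) * d i k :=
  rfl

variable [PartialOrder A] [StarOrderedRing A]

/-- The `ℝ`-module structure that `CStarMatrix` inherits from its entries is not the one the
continuous functional calculus is set up for; the restriction of the `ℂ`-structure is. -/
lemma nonneg_iff_eq_star_mul_self {M : CStarMatrix n n A} : 0 ≤ M ↔ ∃ d, M = star d * d :=
  letI : Module ℝ (CStarMatrix n n A) := Module.complexToReal _
  CStarAlgebra.nonneg_iff_eq_star_mul_self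

lemma apply_self_nonneg {M : CStarMatrix n n A} (hM : 0 ≤ M) (k : n) : 0 ≤ M k k := by
  obtain ⟨d, rfl⟩ := nonneg_iff_eq_star_mul_self.mp hM
  exact Finset.sum_nonneg fun i _ => star_mul_self_nonneg (d i k)

lemma eq_zero_of_nonneg_of_apply_self_eq_zero {M : CStarMatrix n n A} (hM : 0 ≤ M)
    (h : ∀ k, M k k = 0) : M = 0 := by
  obtain ⟨d, rfl⟩ := nonneg_iff_eq_star_mul_self.mp hM
  suffices d = 0 by rw [this, mul_zero]
  ext i k
  have hsum : ∑ j, star (d j k) * d j k = 0 := h k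
  have hik := (Finset.sum_eq_zero_iff_of_nonneg fun j _ => star_mul_self_nonneg (d j k)).mp
    hsum i (Finset.mem_univ i)
  exact (CStarRing.star_mul_self_eq_zero_iff _).mp hik

lemma nonneg_of_forall_conj_apply_self_nonneg {M : CStarMatrix n n A} (hM : IsSelfAdjoint M)
    (h : ∀ (c : CStarMatrix n n A) (k : n), 0 ≤ (star c * M * c) k k) : 0 ≤ M := by
  refine hM.nonneg_of_forall_conj_nonpos_eq_zero fun c hc => ?_
  rw [← neg_eq_zero]
  refine eq_zero_of_nonneg_of_apply_self_eq_zero (neg_nonneg.mpr hc) fun k => ?_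
  exact le_antisymm (neg_nonpos.mpr (h c k)) (apply_self_nonneg (neg_nonneg.mpr hc) k)

end CStarMatrix

namespace SemiInnerProductModule

variable {A X ι : Type*} [NonUnitalCStarAlgebra A] [PartialOrder A] [StarOrderedRing A]
  [AddCommGroup X] [Module ℂ X] (P : SemiInnerProductModule A X)

lemma inner_sum (x : X) (s : Finset ι) (f : ι → X) :
    P.inner x (∑ i ∈ s, f i) = ∑ i ∈ s, P.inner x (f i) :=
  map_sum (AddMonoidHom.mk' (P.inner x) (P.inner_add x)) f s

lemma sum_inner (s : Finset ι) (f : ι → X) (y : X) :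
    P.inner (∑ i ∈ s, f i) y = ∑ i ∈ s, P.inner (f i) y := by
  simp only [← P.star_inner y, inner_sum, star_sum]

lemma rsmul_inner (x y : X) (a : A) : P.inner (P.rsmul x a) y = star a * P.inner x y := by
  rw [← P.star_inner, P.inner_rsmul, star_mul, P.star_inner]

def gram (x : ι → X) : CStarMatrix ι ι A :=
  CStarMatrix.ofMatrix (Matrix.of fun i j => P.inner (x i) (x j))

lemma gram_isSelfAdjoint (x : ι → X) : IsSelfAdjoint (P.gram x) :=
  CStarMatrix.ext fun i j => P.star_inner (x j) (x i)

variable [Fintype ι]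

lemma conj_gram_apply_self (x : ι → X) (c : CStarMatrix ι ι A) (k : ι) :
    (star c * P.gram x * c) k k
      = P.inner (∑ i, P.rsmul (x i) (c i k)) (∑ j, P.rsmul (x j) (c j k)) := by
  simp only [sum_inner, rsmul_inner, inner_sum, P.inner_rsmul, CStarMatrix.mul_apply,
    Finset.sum_mul, mul_assoc]
  rfl

lemma gram_nonneg (x : ι → X) : 0 ≤ P.gram x :=
  CStarMatrix.nonneg_of_forall_conj_apply_self_nonneg (P.gram_isSelfAdjoint x) fun c k => by
    rw [conj_gram_apply_self]
    exact P.inner_self_nonneg _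

end SemiInnerProductModule

/-- The Gram matrix `[⟨xᵢ, xⱼ⟩]` of finitely many elements of a semi-inner product
`A`-module is a positive element of `Mₙ(A)`. -/
theorem gram_matrix_isPosElem {A X : Type*}
    [NonUnitalCStarAlgebra A] [PartialOrder A] [StarOrderedRing A]
    [AddCommGroup X] [Module ℂ X]
    (P : SemiInnerProductModule A X) (n : ℕ) (x : Fin n → X) :
    Matrix.IsPosElem (Matrix.of fun i j => P.inner (x i) (x j)) :=
  CStarMatrix.nonneg_iff_eq_star_mul_self.mp (P.gram_nonneg x)
end

section
/- Let H be a complex Hilbert space, x, y ∈ H, and S, T bounded linear operators on H. Define the covariance cov_{x,y}(S,T) = ‖y‖²·(Sx | Tx) − (Sx | y)(y | Tx) and variances var_{x,y}(S) = cov_{x,y}(S,S), var_{x,y}(T) = cov_{x,y}(T,T). Then the 2×2 complex matrix [[var_{x,y}(S), cov_{x,y}(S,T)], [conj(cov_{x,y}(S,T)), var_{x,y}(T)]] is positive semidefinite; in particular the covariance–variance inequality |cov_{x,y}(S,T)|² ≤ var_{x,y}(S) · var_{x,y}(T) holds. -/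
/-!
With `P` the orthogonal projection onto `(ℂ ∙ y)ᗮ`, the covariance is a Gram inner product:
`cov_{x,y}(S,T) = ⟪‖y‖ • P (S x), ‖y‖ • P (T x)⟫`. A Gram matrix is positive semidefinite, and
the covariance–variance inequality is the Cauchy–Schwarz inequality for these two vectors.
-/

open scoped InnerProductSpace ComplexConjugate ComplexOrder

/-- The covariance `cov_{x,y}(S,T) = ‖y‖²⟪Sx,Tx⟫ − ⟪Sx,y⟫⟪y,Tx⟫` of two bounded
operators with respect to vectors `x, y`. -/
noncomputable def covOp {H : Type*} [NormedAddCommGroup H] [InnerProductSpace ℂ H]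
    (x y : H) (S T : H →L[ℂ] H) : ℂ :=
  (‖y‖ : ℂ) ^ 2 * ⟪S x, T x⟫_ℂ - ⟪S x, y⟫_ℂ * ⟪y, T x⟫_ℂ

section

variable {𝕜 E : Type*} [RCLike 𝕜] [NormedAddCommGroup E] [InnerProductSpace 𝕜 E]

theorem Matrix.posSemidef_inner_fin_two (a b : E) :
    (!![⟪a, a⟫_𝕜, ⟪a, b⟫_𝕜; ⟪b, a⟫_𝕜, ⟪b, b⟫_𝕜]).PosSemidef := by
  convert Matrix.posSemidef_gram 𝕜 ![a, b] using 1
  ext i j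
  fin_cases i <;> fin_cases j <;> rfl

theorem norm_inner_sq_le_re_inner_self_mul (a b : E) :
    ‖⟪a, b⟫_𝕜‖ ^ 2 ≤ RCLike.re ⟪a, a⟫_𝕜 * RCLike.re ⟪b, b⟫_𝕜 := by
  simpa only [sq, norm_inner_symm b a] using inner_mul_inner_self_le a b

theorem norm_sq_mul_inner_starProjection_orthogonal_singleton (y u v : E) :
    (‖y‖ : 𝕜) ^ 2 * ⟪(𝕜 ∙ y)ᗮ.starProjection u, (𝕜 ∙ y)ᗮ.starProjection v⟫_𝕜 =
      (‖y‖ : 𝕜) ^ 2 * ⟪u, v⟫_𝕜 - ⟪u, y⟫_𝕜 * ⟪y, v⟫_𝕜 := by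
  have hproj : (‖y‖ : 𝕜) ^ 2 • (𝕜 ∙ y)ᗮ.starProjection v = (‖y‖ : 𝕜) ^ 2 • v - ⟪y, v⟫_𝕜 • y := by
    rw [Submodule.starProjection_orthogonal_val, smul_sub, ← RCLike.ofReal_pow,
      Submodule.smul_starProjection_singleton]
  rw [Submodule.inner_starProjection_left_eq_right,
    Submodule.starProjection_eq_self_iff.mpr (Submodule.starProjection_apply_mem _ _),
    ← inner_smul_right, hproj, inner_sub_right, inner_smul_right, inner_smul_right]
  ring

end

theorem covOp_eq_inner_smul_starProjection {H : Type*} [NormedAddCommGroup H]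
    [InnerProductSpace ℂ H] (x y : H) (S T : H →L[ℂ] H) :
    covOp x y S T = ⟪(‖y‖ : ℂ) • (ℂ ∙ y)ᗮ.starProjection (S x),
      (‖y‖ : ℂ) • (ℂ ∙ y)ᗮ.starProjection (T x)⟫_ℂ := by
  rw [inner_smul_left, inner_smul_right, Complex.conj_ofReal, ← mul_assoc, ← sq]
  exact (norm_sq_mul_inner_starProjection_orthogonal_singleton y (S x) (T x)).symm

/-- The covariance–variance inequality: the `2 × 2` matrix
`[[var(S), cov(S,T)], [conj (cov(S,T)), var(T)]]` is positive semidefinite, and in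
particular `|cov(S,T)|² ≤ var(S)·var(T)`. -/
theorem covariance_variance_ineq {H : Type*}
    [NormedAddCommGroup H] [InnerProductSpace ℂ H]
    (x y : H) (S T : H →L[ℂ] H) :
    (Matrix.PosSemidef
      !![covOp x y S S, covOp x y S T;
         conj (covOp x y S T), covOp x y T T])
    ∧ ‖covOp x y S T‖ ^ 2 ≤ (covOp x y S S).re * (covOp x y T T).re := by
  simp only [covOp_eq_inner_smul_starProjection, inner_conj_symm]
  exact ⟨Matrix.posSemidef_inner_fin_two _ _, norm_inner_sq_le_re_inner_self_mul _ _⟩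
end

section
/- Let a be a nonzero positive element of a unital C*-algebra A. Then for every k ≥ 0 one has ‖f_{k+1}(a)‖ ≤ (1/4)·‖f_k(a)‖². -/
section Sequences

variable {A : Type*} [CStarAlgebra A]

/-- The sequence `f₀(a) = a`, `f_{m+1}(a) = f_m(a)·(‖f_m(a)‖·1 − f_m(a))`. -/
noncomputable def fSeq (a : A) : ℕ → A
  | 0 => a
  | m + 1 => fSeq a m * (‖fSeq a m‖ • (1 : A) - fSeq a m)

/-- The sequence `g_m(a) = ‖f_m(a)‖·1 − f_m(a)`. -/
noncomputable def gSeq (a : A) (m : ℕ) : A := ‖fSeq a m‖ • (1 : A) - fSeq a m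

open Classical in
/-- The sequence `p_m(a)`: as long as `f_m(a) ≠ 0`,
`p_m(a) = (1/‖f₀(a)‖)·1 + Σ_{l=1}^m (∏_{k=0}^{l-1} g_k(a)²)/(∏_{k=0}^{l} ‖f_k(a)‖)`,
and `p_j(a) = p_M(a)` for `j > M`, where `M` is the last index with `f_M(a) ≠ 0`. -/
noncomputable def pSeq (a : A) : ℕ → A
  | 0 => ‖a‖⁻¹ • (1 : A)
  | m + 1 =>
    if fSeq a (m + 1) = 0 then pSeq a m
    else pSeq a m +
      (((List.range (m + 2)).map fun k => ‖fSeq a k‖).prod)⁻¹ •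
        ((List.range (m + 1)).map fun k => gSeq a k ^ 2).prod

end Sequences

/-! Each `f_k(a)` is positive, so its spectrum lies in `[0, ‖f_k(a)‖]`, and
`f_{k+1}(a) = h(f_k(a))` for `h(x) = x (‖f_k(a)‖ - x)`. On that interval `0 ≤ h ≤ ‖f_k(a)‖² / 4`,
so the continuous functional calculus makes `f_{k+1}(a)` positive again with norm at most
`‖f_k(a)‖² / 4`. -/

lemma mul_smul_one_sub_eq_cfc {A : Type*} [Ring A] [Algebra ℝ A] [TopologicalSpace A] [StarRing A]
    [ContinuousFunctionalCalculus ℝ A IsSelfAdjoint] {b : A} (hb : IsSelfAdjoint b) (r : ℝ) :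
    b * (r • (1 : A) - b) = cfc (fun x : ℝ => x * (r - x)) b := by
  rw [cfc_mul _ _ b, cfc_id' ℝ b, cfc_sub _ _ b, cfc_const _ b, cfc_id' ℝ b,
    Algebra.algebraMap_eq_smul_one]

section PositiveElements

variable {A : Type*} [CStarAlgebra A] [PartialOrder A] [StarOrderedRing A]

lemma mem_Icc_norm_of_mem_spectrum {b : A} (hb : 0 ≤ b) {x : ℝ} (hx : x ∈ spectrum ℝ b) :
    x ∈ Set.Icc 0 ‖b‖ := by
  rcases subsingleton_or_nontrivial A with _ | _
  · simp [spectrum.of_subsingleton] at hx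
  exact ⟨spectrum_nonneg_of_nonneg hb hx, (le_abs_self x).trans (spectrum.norm_le_norm_of_mem hx)⟩

lemma mul_norm_smul_one_sub_nonneg {b : A} (hb : 0 ≤ b) : 0 ≤ b * (‖b‖ • (1 : A) - b) := by
  rw [mul_smul_one_sub_eq_cfc (.of_nonneg hb)]
  refine cfc_nonneg fun x hx => ?_
  obtain ⟨hx0, hxb⟩ := mem_Icc_norm_of_mem_spectrum hb hx
  nlinarith

lemma norm_mul_norm_smul_one_sub_le {b : A} (hb : 0 ≤ b) :
    ‖b * (‖b‖ • (1 : A) - b)‖ ≤ 1 / 4 * ‖b‖ ^ 2 := by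
  rw [mul_smul_one_sub_eq_cfc (.of_nonneg hb)]
  refine norm_cfc_le (by positivity) fun x hx => ?_
  obtain ⟨hx0, hxb⟩ := mem_Icc_norm_of_mem_spectrum hb hx
  rw [Real.norm_of_nonneg (by nlinarith)]
  nlinarith [sq_nonneg (x - ‖b‖ / 2)]

lemma fSeq_nonneg {a : A} (ha : 0 ≤ a) (m : ℕ) : 0 ≤ fSeq a m := by
  induction m with
  | zero => exact ha
  | succ n ih => exact mul_norm_smul_one_sub_nonneg ih

end PositiveElements

theorem norm_fSeq_succ_le_general {A : Type*} [CStarAlgebra A]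
    [PartialOrder A] [StarOrderedRing A]
    (a : A) (ha : 0 ≤ a) (k : ℕ) :
    ‖fSeq a (k + 1)‖ ≤ (1 / 4) * ‖fSeq a k‖ ^ 2 :=
  norm_mul_norm_smul_one_sub_le (fSeq_nonneg ha k)

/-- For a nonzero positive element `a` of a unital C⋆-algebra and every `k ≥ 0`,
`‖f_{k+1}(a)‖ ≤ (1/4)·‖f_k(a)‖²`. -/
theorem norm_fSeq_succ_le {A : Type*} [CStarAlgebra A]
    [PartialOrder A] [StarOrderedRing A]
    (a : A) (ha : 0 ≤ a) (ha' : a ≠ 0) (k : ℕ) :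
    ‖fSeq a (k + 1)‖ ≤ (1 / 4) * ‖fSeq a k‖ ^ 2 :=
  norm_fSeq_succ_le_general a ha k
end

section
/- Let a be a nonzero positive bounded linear operator on a complex Hilbert space H with finite spectrum, and let M be the natural number with f_M(a) ≠ 0 and f_{M+1}(a) = 0. Then the range of a is a closed subspace of H and a·p_M(a) equals the orthogonal projection of H onto the range of a. In particular, if a is invertible then p_M(a) = a⁻¹. -/
theorem Algebra.commute_of_mem_adjoin_singleton {R A : Type*} [CommSemiring R] [Semiring A]
    [Algebra R A] {a x y : A} (hx : x ∈ Algebra.adjoin R {a}) (hy : y ∈ Algebra.adjoin R {a}) :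
    Commute x y :=
  Algebra.commute_of_mem_adjoin_singleton_of_commute hy (Algebra.commute_of_mem_adjoin_self hx).symm

theorem IsSelfAdjoint.of_mem_adjoin_singleton {R A : Type*} [CommSemiring R] [StarRing R]
    [TrivialStar R] [Semiring A] [StarRing A] [Algebra R A] [StarModule R A] {a x : A}
    (ha : IsSelfAdjoint a) (hx : x ∈ Algebra.adjoin R {a}) : IsSelfAdjoint x := by
  induction hx using Algebra.adjoin_induction with
  | mem y hy => rwa [Set.mem_singleton_iff.mp hy]
  | algebraMap r => exact .algebraMap A (.all r)
  | add y z _ _ hy hz => exact hy.add hz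
  | mul y z hy' hz' hy hz =>
    exact (IsSelfAdjoint.commute_iff hy hz).mp (Algebra.commute_of_mem_adjoin_singleton hy' hz')

theorem isIdempotentElem_mul_of_mul_mul_eq {R : Type*} [Semigroup R] {a b : R}
    (h : a * b * a = a) : IsIdempotentElem (a * b) := by
  rw [IsIdempotentElem, ← mul_assoc, h]

theorem eq_ringInverse_of_mul_mul_eq {M₀ : Type*} [MonoidWithZero M₀] {a b : M₀} (hu : IsUnit a)
    (h : a * b * a = a) : b = Ring.inverse a := by
  have hab : a * b = 1 := hu.mul_right_cancel (by rw [h, one_mul])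
  rw [← Ring.inverse_mul_cancel_left a b hu, hab, mul_one]

theorem Module.End.range_mul_eq_of_mul_mul_eq {R M : Type*} [Semiring R] [AddCommMonoid M]
    [Module R M] {a b : Module.End R M} (h : a * b * a = a) :
    LinearMap.range (a * b) = LinearMap.range a :=
  le_antisymm (LinearMap.range_comp_le_range b a) <| by
    conv_lhs => rw [← h]
    exact LinearMap.range_comp_le_range a (a * b)

section Sequences

variable {A : Type*} [CStarAlgebra A] (a : A)

noncomputable def gSeqProd (m : ℕ) : A := ((List.range m).map (gSeq a)).prod

theorem fSeq_succ (m : ℕ) : fSeq a (m + 1) = fSeq a m * gSeq a m := rfl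

theorem gSeqProd_succ (m : ℕ) : gSeqProd a (m + 1) = gSeqProd a m * gSeq a m :=
  List.prod_range_succ _ m

theorem fSeq_eq_mul_gSeqProd (m : ℕ) : fSeq a m = a * gSeqProd a m := by
  induction m with
  | zero => simp [fSeq, gSeqProd]
  | succ m ih => rw [fSeq_succ, gSeqProd_succ, ih, mul_assoc]

theorem fSeq_mem_adjoin (m : ℕ) : fSeq a m ∈ Algebra.adjoin ℝ {a} := by
  induction m with
  | zero => exact Algebra.self_mem_adjoin_singleton ℝ a
  | succ m ih =>
    exact mul_mem ih (sub_mem (Subalgebra.smul_mem _ (one_mem _) _) ih)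

theorem gSeq_mem_adjoin (m : ℕ) : gSeq a m ∈ Algebra.adjoin ℝ {a} :=
  sub_mem (Subalgebra.smul_mem _ (one_mem _) _) (fSeq_mem_adjoin a m)

theorem gSeqProd_mem_adjoin (m : ℕ) : gSeqProd a m ∈ Algebra.adjoin ℝ {a} :=
  Subalgebra.list_prod_mem _ <| by simpa using fun k _ => gSeq_mem_adjoin a k

theorem prod_map_gSeq_sq (m : ℕ) :
    ((List.range m).map fun k => gSeq a k ^ 2).prod = gSeqProd a m ^ 2 := by
  induction m with
  | zero => simp [gSeqProd]
  | succ m ih =>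
    rw [List.prod_range_succ, ih, gSeqProd_succ,
      (Algebra.commute_of_mem_adjoin_singleton (gSeqProd_mem_adjoin a m)
        (gSeq_mem_adjoin a m)).mul_pow]

theorem pSeq_succ_of_fSeq_ne_zero {m : ℕ} (h : fSeq a (m + 1) ≠ 0) :
    pSeq a (m + 1) =
      pSeq a m + (∏ k ∈ Finset.range (m + 2), ‖fSeq a k‖)⁻¹ • gSeqProd a (m + 1) ^ 2 := by
  rw [pSeq, if_neg h, prod_map_gSeq_sq]
  -- `∏ k ∈ Finset.range n, _` unfolds to the list product used in `pSeq`
  rfl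

theorem pSeq_mem_adjoin (m : ℕ) : pSeq a m ∈ Algebra.adjoin ℝ {a} := by
  induction m with
  | zero => exact Subalgebra.smul_mem _ (one_mem _) _
  | succ m ih =>
    by_cases h : fSeq a (m + 1) = 0
    · rwa [pSeq, if_pos h]
    · rw [pSeq_succ_of_fSeq_ne_zero a h]
      exact add_mem ih (Subalgebra.smul_mem _ (pow_mem (gSeqProd_mem_adjoin a _) 2) _)

theorem one_sub_mul_pSeq {m : ℕ} (hm : fSeq a m ≠ 0) :
    1 - a * pSeq a m = (∏ k ∈ Finset.range (m + 1), ‖fSeq a k‖)⁻¹ • gSeqProd a (m + 1) := by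
  induction m with
  | zero =>
    have : ‖a‖ ≠ 0 := norm_ne_zero_iff.mpr hm
    simp [pSeq, gSeqProd, gSeq, fSeq, smul_sub, this]
  | succ m ih =>
    have hm' : fSeq a m ≠ 0 := fun h0 => hm (by rw [fSeq_succ, h0, zero_mul])
    have hnorm : ‖fSeq a (m + 1)‖ ≠ 0 := norm_ne_zero_iff.mpr hm
    set N := ∏ k ∈ Finset.range (m + 1), ‖fSeq a k‖
    have hN : N⁻¹ = (∏ k ∈ Finset.range (m + 2), ‖fSeq a k‖)⁻¹ * ‖fSeq a (m + 1)‖ := by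
      rw [Finset.prod_range_succ _ (m + 1), mul_inv, inv_mul_cancel_right₀ hnorm]
    have hcomm : Commute (gSeqProd a (m + 1)) (gSeq a (m + 1)) :=
      Algebra.commute_of_mem_adjoin_singleton (gSeqProd_mem_adjoin a _) (gSeq_mem_adjoin a _)
    rw [pSeq_succ_of_fSeq_ne_zero a hm, mul_add, sub_add_eq_sub_sub, ih hm', mul_smul_comm, sq,
      ← mul_assoc, ← fSeq_eq_mul_gSeqProd, hN, gSeqProd_succ a (m + 1), hcomm.eq, gSeq, sub_mul,
      smul_mul_assoc, one_mul, smul_sub, smul_smul]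

theorem mul_pSeq_mul_self {M : ℕ} (hM : fSeq a M ≠ 0) (hM' : fSeq a (M + 1) = 0) :
    a * pSeq a M * a = a := by
  have h : a * (1 - a * pSeq a M) = 0 := by
    rw [one_sub_mul_pSeq a hM, mul_smul_comm, ← fSeq_eq_mul_gSeqProd, hM', smul_zero]
  rw [mul_sub, mul_one, sub_eq_zero] at h
  rw [mul_assoc, ← (Algebra.commute_of_mem_adjoin_self (pSeq_mem_adjoin a M)).eq, ← h]

end Sequences

theorem mul_pSeq_eq_proj_of_finite_spectrum_general {H : Type*}
    [NormedAddCommGroup H] [InnerProductSpace ℂ H] [CompleteSpace H]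
    (a : H →L[ℂ] H) (ha : 0 ≤ a)
    (M : ℕ) (hM : fSeq a M ≠ 0) (hM' : fSeq a (M + 1) = 0) :
    IsClosed (LinearMap.range (a : H →ₗ[ℂ] H) : Set H)
      ∧ IsSelfAdjoint (a * pSeq a M)
      ∧ IsIdempotentElem (a * pSeq a M)
      ∧ LinearMap.range ((a * pSeq a M : H →L[ℂ] H) : H →ₗ[ℂ] H) = LinearMap.range (a : H →ₗ[ℂ] H)
      ∧ (IsUnit a → pSeq a M = Ring.inverse a) := by
  have hgen : a * pSeq a M * a = a := mul_pSeq_mul_self a hM hM'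
  have hidem : IsIdempotentElem (a * pSeq a M) := isIdempotentElem_mul_of_mul_mul_eq hgen
  have hrange : LinearMap.range ((a * pSeq a M : H →L[ℂ] H) : H →ₗ[ℂ] H) =
      LinearMap.range (a : H →ₗ[ℂ] H) := by
    rw [ContinuousLinearMap.toLinearMap_mul]
    exact Module.End.range_mul_eq_of_mul_mul_eq <| by
      rw [← ContinuousLinearMap.toLinearMap_mul, ← ContinuousLinearMap.toLinearMap_mul, hgen]
  refine ⟨hrange ▸ ContinuousLinearMap.IsIdempotentElem.isClosed_range hidem, ?_, hidem, hrange,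
    fun hu => eq_ringInverse_of_mul_mul_eq hu hgen⟩
  exact (IsSelfAdjoint.of_nonneg ha).of_mem_adjoin_singleton
    (mul_mem (Algebra.self_mem_adjoin_singleton ℝ a) (pSeq_mem_adjoin a M))

/-- For a nonzero positive operator `a` with finite spectrum and `M` the last index
with `f_M(a) ≠ 0`, the range of `a` is closed and `a·p_M(a)` is the orthogonal
projection onto the range of `a` (i.e. the self-adjoint idempotent with range equal
to the range of `a`). In particular, if `a` is invertible then `p_M(a) = a⁻¹`. -/
theorem mul_pSeq_eq_proj_of_finite_spectrum {H : Type*}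
    [NormedAddCommGroup H] [InnerProductSpace ℂ H] [CompleteSpace H]
    (a : H →L[ℂ] H) (ha : 0 ≤ a) (ha' : a ≠ 0)
    (hfin : (spectrum ℂ a).Finite)
    (M : ℕ) (hM : fSeq a M ≠ 0) (hM' : fSeq a (M + 1) = 0) :
    IsClosed (LinearMap.range (a : H →ₗ[ℂ] H) : Set H)
      ∧ IsSelfAdjoint (a * pSeq a M)
      ∧ IsIdempotentElem (a * pSeq a M)
      ∧ LinearMap.range ((a * pSeq a M : H →L[ℂ] H) : H →ₗ[ℂ] H) = LinearMap.range (a : H →ₗ[ℂ] H)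
      ∧ (IsUnit a → pSeq a M = Ring.inverse a) :=
  mul_pSeq_eq_proj_of_finite_spectrum_general a ha M hM hM'
end
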